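/- Nonblocking coordinator theorem: let L₁ ⊆ E₁*, L₂ ⊆ E₂* be languages, E₁∩E₂ ⊆ E₀ ⊆ E₁∪E₂, and let P₀ : (E₁∪E₂)* → E₀* be an L_i-observer for i = 1,2. Let L₀ = P₀(L₁) ∥ P₀(L₂). Then \overline{L₁ ∥ L₂ ∥ L₀} = \overline{L₁} ∥ \overline{L₂} ∥ \overline{L₀}, i.e., the composed system with coordinator L₀ is nonblocking. -/

import Mathlib

open scoped Classical

/-- Natural projection: erase letters not in `A`. -/
noncomputable def proj {Ev : Type*} (A : Set Ev) (w : List Ev) : List Ev :=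
  w.filter (fun a => decide (a ∈ A))

/-- Projection of a language. -/
noncomputable def projL {Ev : Type*} (A : Set Ev) (L : Set (List Ev)) : Set (List Ev) :=
  proj A '' L

/-- Words over an alphabet `A`, i.e., `A*`. -/
def star {Ev : Type*} (A : Set Ev) : Set (List Ev) := {w | ∀ a ∈ w, a ∈ A}

/-- Synchronous product of `L₁ ⊆ A*` and `L₂ ⊆ B*`. -/
noncomputable def sync {Ev : Type*} (A B : Set Ev) (L1 L2 : Set (List Ev)) :
    Set (List Ev) :=
  {w | w ∈ star (A ∪ B) ∧ proj A w ∈ L1 ∧ proj B w ∈ L2}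

/-- Prefix closure of a language. -/
def prefixCl {Ev : Type*} (L : Set (List Ev)) : Set (List Ev) := {w | ∃ v, w ++ v ∈ L}

/-- Controllability of `K` with respect to (prefix-closed) `L` and uncontrollable events `Eu`. -/
def controllable {Ev : Type*} (K L : Set (List Ev)) (Eu : Set Ev) : Prop :=
  ∀ s ∈ prefixCl K, ∀ u ∈ Eu, s ++ [u] ∈ L → s ++ [u] ∈ prefixCl K

/-- Supremal controllable sublanguage of `K` w.r.t. `N` and `U`. -/
noncomputable def supC {Ev : Type*} (K N : Set (List Ev)) (U : Set Ev) : Set (List Ev) :=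
  ⋃₀ {M | M ⊆ K ∧ controllable M N U}

/-- `proj A` is an `L`-observer. -/
def observer {Ev : Type*} (A : Set Ev) (L : Set (List Ev)) : Prop :=
  ∀ t ∈ projL A L, ∀ s ∈ prefixCl L, proj A s <+: t →
    ∃ u, s ++ u ∈ L ∧ proj A (s ++ u) = t

/-- `proj A` is locally control consistent (LCC) for `L` (w.r.t. uncontrollable events `Eu`). -/
def lcc {Ev : Type*} (A Eu : Set Ev) (L : Set (List Ev)) : Prop :=
  ∀ s ∈ L, ∀ σ ∈ A ∩ Eu, proj A s ++ [σ] ∈ projL A L →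
    (∃ u, (∀ a ∈ u, a ∉ A) ∧ s ++ u ++ [σ] ∈ L) →
    ∃ u, (∀ a ∈ u, a ∈ Eu ∧ a ∉ A) ∧ s ++ u ++ [σ] ∈ L

/-!
Take `w` in the right-hand side. Its `E₀`-projection extends to a word `P₀ w ++ t` of `L₀`, so
`P₀(P₁ w) ++ P_{E₁}(t) ∈ P₀(L₁)`, and the observer property extends `P₁ w` to `P₁ w ++ u₁ ∈ L₁`
with `P₀ u₁ = P_{E₁} t`; likewise `P₂ w ++ u₂ ∈ L₂`. Since every event shared by two of the
components lies in `E₀`, the three words `u₁`, `u₂`, `t` agree on their common events and can be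
interleaved into one word `v`; then `w ++ v ∈ L₁ ∥ L₂ ∥ L₀`.
-/

namespace Coordination

variable {Ev : Type*}

lemma proj_append (A : Set Ev) (s t : List Ev) : proj A (s ++ t) = proj A s ++ proj A t :=
  List.filter_append s t

lemma proj_cons (A : Set Ev) (a : Ev) (w : List Ev) :
    proj A (a :: w) = if a ∈ A then a :: proj A w else proj A w := by
  by_cases h : a ∈ A <;> simp [proj, h]

lemma proj_proj (A B : Set Ev) (w : List Ev) : proj A (proj B w) = proj (A ∩ B) w := by
  simp only [proj, List.filter_filter]
  exact List.filter_congr fun x _ => by simp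

lemma proj_proj_of_subset {A B : Set Ev} (h : A ⊆ B) (w : List Ev) :
    proj A (proj B w) = proj A w := by
  rw [proj_proj, Set.inter_eq_self_of_subset_left h]

lemma proj_congr {A B : Set Ev} {w : List Ev} (h : ∀ a ∈ w, a ∈ A ↔ a ∈ B) :
    proj A w = proj B w :=
  List.filter_congr fun x hx => by simp [h x hx]

lemma proj_mem_star (A : Set Ev) (w : List Ev) : proj A w ∈ star A := fun a ha => by
  simp only [proj, List.mem_filter, decide_eq_true_eq] at ha
  exact ha.2

lemma append_mem_star {A : Set Ev} {s t : List Ev} :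
    s ++ t ∈ star A ↔ s ∈ star A ∧ t ∈ star A :=
  List.forall_mem_append

lemma star_mono {A B : Set Ev} (h : A ⊆ B) : star A ⊆ star B :=
  fun _ hw a ha => h (hw a ha)

lemma proj_eq_self {A : Set Ev} {w : List Ev} (h : w ∈ star A) : proj A w = w :=
  List.filter_eq_self.mpr fun a ha => by simpa using h a ha

lemma proj_eq_proj_inter {A B : Set Ev} {w : List Ev} (h : w ∈ star B) :
    proj A w = proj (A ∩ B) w :=
  proj_congr fun a ha => ⟨fun hA => ⟨hA, h a ha⟩, And.left⟩

lemma proj_mem_prefixCl {A : Set Ev} {L : Set (List Ev)} {s t : List Ev}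
    (h : proj A (s ++ t) ∈ L) : proj A s ∈ prefixCl L :=
  ⟨proj A t, by rwa [← proj_append]⟩

theorem exists_proj_eq_of_proj_inter_eq {A B : Set Ev} :
    ∀ {u₁ u₂ : List Ev}, u₁ ∈ star A → u₂ ∈ star B → proj (A ∩ B) u₁ = proj (A ∩ B) u₂ →
      ∃ v ∈ star (A ∪ B), proj A v = u₁ ∧ proj B v = u₂ := by
  intro u₁
  induction u₁ with
  | nil =>
    intro u₂ _ h₂ h
    refine ⟨u₂, star_mono Set.subset_union_right h₂, ?_, proj_eq_self h₂⟩
    rw [proj_eq_proj_inter h₂, ← h]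
    rfl
  | cons a u₁ ih =>
    intro u₂
    induction u₂ with
    | nil =>
      intro h₁ _ h
      refine ⟨a :: u₁, star_mono Set.subset_union_left h₁, proj_eq_self h₁, ?_⟩
      rw [proj_eq_proj_inter h₁, Set.inter_comm, h]
      rfl
    | cons b u₂ ih₂ =>
      intro h₁ h₂ h
      have haA : a ∈ A := h₁ a List.mem_cons_self
      have hbB : b ∈ B := h₂ b List.mem_cons_self
      have h₁' : u₁ ∈ star A := fun x hx => h₁ x (List.mem_cons_of_mem a hx)
      have h₂' : u₂ ∈ star B := fun x hx => h₂ x (List.mem_cons_of_mem b hx)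
      by_cases haB : a ∈ B
      · by_cases hbA : b ∈ A
        · simp only [proj_cons, Set.mem_inter_iff, haA, haB, hbA, hbB, and_self, ite_true,
            List.cons.injEq] at h
          obtain ⟨rfl, h⟩ := h
          obtain ⟨v, hv, hvA, hvB⟩ := ih h₁' h₂' h
          exact ⟨a :: v, List.forall_mem_cons.mpr ⟨Or.inl haA, hv⟩,
            by simp [proj_cons, haA, hvA], by simp [proj_cons, hbB, hvB]⟩
        · simp only [proj_cons (A ∩ B) b, Set.mem_inter_iff, hbA, false_and, ite_false] at h
          obtain ⟨v, hv, hvA, hvB⟩ := ih₂ h₁ h₂' h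
          exact ⟨b :: v, List.forall_mem_cons.mpr ⟨Or.inr hbB, hv⟩,
            by simp [proj_cons, hbA, hvA], by simp [proj_cons, hbB, hvB]⟩
      · simp only [proj_cons (A ∩ B) a, Set.mem_inter_iff, haB, and_false, ite_false] at h
        obtain ⟨v, hv, hvA, hvB⟩ := ih h₁' h₂ h
        exact ⟨a :: v, List.forall_mem_cons.mpr ⟨Or.inl haA, hv⟩,
          by simp [proj_cons, haA, hvA], by simp [proj_cons, haB, hvB]⟩

lemma mem_sync_sync_iff {A B C : Set Ev} {L₁ L₂ L₃ : Set (List Ev)} {w : List Ev} :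
    w ∈ sync A (B ∪ C) L₁ (sync B C L₂ L₃) ↔
      w ∈ star (A ∪ (B ∪ C)) ∧ proj A w ∈ L₁ ∧ proj B w ∈ L₂ ∧ proj C w ∈ L₃ := by
  simp only [sync, Set.mem_ofPred_eq, proj_proj_of_subset Set.subset_union_left,
    proj_proj_of_subset Set.subset_union_right, proj_mem_star, true_and]

lemma prefixCl_sync_sync_subset (A B C : Set Ev) (L₁ L₂ L₃ : Set (List Ev)) :
    prefixCl (sync A (B ∪ C) L₁ (sync B C L₂ L₃)) ⊆
      sync A (B ∪ C) (prefixCl L₁) (sync B C (prefixCl L₂) (prefixCl L₃)) := by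
  rintro w ⟨v, hwv⟩
  obtain ⟨hstar, h₁, h₂, h₃⟩ := mem_sync_sync_iff.mp hwv
  exact mem_sync_sync_iff.mpr ⟨(append_mem_star.mp hstar).1, proj_mem_prefixCl h₁,
    proj_mem_prefixCl h₂, proj_mem_prefixCl h₃⟩

lemma exists_proj_eq_three_of_proj_eq {E₁ E₂ E₀ : Set Ev} (hsh : E₁ ∩ E₂ ⊆ E₀)
    {u₁ u₂ t : List Ev} (h₁ : u₁ ∈ star E₁) (h₂ : u₂ ∈ star E₂) (ht : t ∈ star E₀)
    (h₁t : proj E₀ u₁ = proj E₁ t) (h₂t : proj E₀ u₂ = proj E₂ t) :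
    ∃ v ∈ star (E₁ ∪ (E₂ ∪ E₀)), proj E₁ v = u₁ ∧ proj E₂ v = u₂ ∧ proj E₀ v = t := by
  obtain ⟨m, hm, hm₁, hm₀⟩ := exists_proj_eq_of_proj_inter_eq h₁ ht (by
    rw [← proj_eq_proj_inter ht, Set.inter_comm, ← proj_eq_proj_inter h₁, h₁t])
  have hshared : (E₁ ∪ E₀) ∩ E₂ = E₀ ∩ E₂ := by
    ext a
    constructor
    · rintro ⟨ha₁ | ha₀, ha₂⟩
      exacts [⟨hsh ⟨ha₁, ha₂⟩, ha₂⟩, ⟨ha₀, ha₂⟩]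
    · rintro ⟨ha₀, ha₂⟩
      exact ⟨Or.inr ha₀, ha₂⟩
  obtain ⟨v, hv, hvm, hv₂⟩ := exists_proj_eq_of_proj_inter_eq hm h₂ (by
    rw [hshared, ← proj_eq_proj_inter h₂, h₂t, Set.inter_comm, ← proj_proj, hm₀])
  refine ⟨v, star_mono ?_ hv, ?_, hv₂, ?_⟩
  · exact Set.union_subset (Set.union_subset_union_right _ Set.subset_union_right)
      (Set.subset_union_left.trans Set.subset_union_right)
  · rw [← proj_proj_of_subset Set.subset_union_left, hvm, hm₁]
  · rw [← proj_proj_of_subset Set.subset_union_right, hvm, hm₀]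

lemma _root_.observer.exists_append {A : Set Ev} {L : Set (List Ev)} (hobs : observer A L)
    {s r : List Ev} (hs : s ∈ prefixCl L) (hr : proj A s ++ r ∈ projL A L) :
    ∃ u, s ++ u ∈ L ∧ proj A u = r := by
  obtain ⟨u, hu, hproj⟩ := hobs _ hr s hs (List.prefix_append _ _)
  exact ⟨u, hu, List.append_cancel_left (by rwa [← proj_append])⟩

end Coordination

open Coordination in
theorem stmt12_general {Ev : Type*} (E1 E2 E0 : Set Ev)
    (hsh : E1 ∩ E2 ⊆ E0)
    (L1 L2 : Set (List Ev)) (hL1 : L1 ⊆ star E1) (hL2 : L2 ⊆ star E2)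
    (hobs1 : observer E0 L1) (hobs2 : observer E0 L2)
    (L0 : Set (List Ev))
    (hL0 : L0 = sync (E1 ∩ E0) (E2 ∩ E0) (projL E0 L1) (projL E0 L2)) :
    prefixCl (sync E1 (E2 ∪ E0) L1 (sync E2 E0 L2 L0)) =
      sync E1 (E2 ∪ E0) (prefixCl L1) (sync E2 E0 (prefixCl L2) (prefixCl L0)) := by
  refine (prefixCl_sync_sync_subset _ _ _ _ _ _).antisymm fun w hw => ?_
  subst hL0
  obtain ⟨hw, hw₁, hw₂, ⟨t, ht⟩⟩ := mem_sync_sync_iff.mp hw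
  have htE₀ : t ∈ star E0 := fun a ha =>
    (ht.1 a (List.mem_append_right _ ha)).elim And.right And.right
  have hsplit : ∀ E, proj (E ∩ E0) (proj E0 w ++ t) = proj E0 (proj E w) ++ proj E t := by
    intro E
    rw [proj_append, proj_proj_of_subset Set.inter_subset_right, proj_proj, Set.inter_comm E0 E,
      ← proj_eq_proj_inter htE₀]
  obtain ⟨u₁, hu₁, hu₁t⟩ := hobs1.exists_append hw₁ (hsplit E1 ▸ ht.2.1)
  obtain ⟨u₂, hu₂, hu₂t⟩ := hobs2.exists_append hw₂ (hsplit E2 ▸ ht.2.2)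
  obtain ⟨v, hv, hv₁, hv₂, hv₀⟩ := exists_proj_eq_three_of_proj_eq hsh
    (append_mem_star.mp (hL1 hu₁)).2 (append_mem_star.mp (hL2 hu₂)).2 htE₀ hu₁t hu₂t
  refine ⟨v, mem_sync_sync_iff.mpr ⟨append_mem_star.mpr ⟨hw, hv⟩, ?_, ?_, ?_⟩⟩
  · rwa [proj_append, hv₁]
  · rwa [proj_append, hv₂]
  · rwa [proj_append, hv₀]

/-- nonblocking coordinator theorem. With L0 = P0(L1) || P0(L2) and P0 an
observer for L1 and L2, the composed system with coordinator L0 is nonblocking. -/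
theorem stmt12 {Ev : Type*} (E1 E2 E0 : Set Ev)
    (hsh : E1 ∩ E2 ⊆ E0) (hE0 : E0 ⊆ E1 ∪ E2)
    (L1 L2 : Set (List Ev)) (hL1 : L1 ⊆ star E1) (hL2 : L2 ⊆ star E2)
    (hobs1 : observer E0 L1) (hobs2 : observer E0 L2)
    (L0 : Set (List Ev))
    (hL0 : L0 = sync (E1 ∩ E0) (E2 ∩ E0) (projL E0 L1) (projL E0 L2)) :
    prefixCl (sync E1 (E2 ∪ E0) L1 (sync E2 E0 L2 L0)) =
      sync E1 (E2 ∪ E0) (prefixCl L1) (sync E2 E0 (prefixCl L2) (prefixCl L0)) :=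
  stmt12_general E1 E2 E0 hsh L1 L2 hL1 hL2 hobs1 hobs2 L0 hL0
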